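/- On a geometrically ruled surface X over a genus-g curve with e > 0, polarized by H = C_0 + βF with β > e, the line bundle O_X((2β+g-1-e)F) ⊗ π*M with M a general degree-0 line bundle on C is an Ulrich line bundle with respect to H. -/

import Mathlib

/-! Divisor classes on `X` are elements of `DX`, and `h i D` stands for `h^i(X, O_X(D))`.

Both twists `L(-H)` and `L(-2H)` have negative `C_0`-coefficient, so they have no sections.
By Serre duality their `h^2` is `h^0` of `-C_0 + (g-1-β)F + π*(k-M)`, again zero, resp. of
`(g-1)F + π*(k-M)`, a degree-`(g-1)` twist which is zero by genericity of `M`. Finally the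
Riemann–Roch polynomial `(a+1)(b+1-g-ae/2)` vanishes at both twists (the first factor for `t = 1`,
the second for `t = 2`), so `χ = 0` forces `h^1 = 0` as well. -/

theorem forall_eq_zero_of_euler_char_eq_zero {α : Type*} (h : ℕ → α → ℕ)
    (hdim : ∀ i > 2, ∀ L : α, h i L = 0) {L : α} (h0 : h 0 L = 0) (h2 : h 2 L = 0)
    (hχ : (h 0 L : ℚ) - h 1 L + h 2 L = 0) : ∀ i, h i L = 0
  | 0 => h0
  | 1 => by
    rw [h0, h2, Nat.cast_zero] at hχ
    exact_mod_cast (by linarith : (h 1 L : ℚ) = 0)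
  | 2 => h2
  | _ + 3 => hdim _ (by omega) _

section RuledSurface

variable {DX PC : Type*} [AddCommGroup DX] [AddCommGroup PC]
  (g e : ℤ) (C0 F : DX) (πstar : PC →+ DX) (k : PC) (K : DX)

theorem canonical_sub_eq (hK : K = (-2) • C0 + (2 * g - 2 - e) • F + πstar k)
    (a b : ℤ) (N : PC) :
    K - (a • C0 + b • F + πstar N)
      = (-2 - a) • C0 + (2 * g - 2 - e - b) • F + πstar (k - N) := by
  rw [hK, map_sub]
  module

theorem forall_cohomology_eq_zero_of_riemannRoch_eq_zero
    (hK : K = (-2) • C0 + (2 * g - 2 - e) • F + πstar k)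
    (h : ℕ → DX → ℕ)
    (hSerre : ∀ i ≤ 2, ∀ D : DX, h i D = h (2 - i) (K - D))
    (hdim : ∀ i > 2, ∀ D : DX, h i D = 0)
    (hchi : ∀ (a b : ℤ) (N : PC),
      ((h 0 (a • C0 + b • F + πstar N) : ℚ)
        - (h 1 (a • C0 + b • F + πstar N) : ℚ)
        + (h 2 (a • C0 + b • F + πstar N) : ℚ))
        = ((a : ℚ) + 1) * ((b : ℚ) + 1 - (g : ℚ) - (a : ℚ) * (e : ℚ) / 2))
    (hC0neg : ∀ (a b : ℤ) (N : PC), a < 0 → h 0 (a • C0 + b • F + πstar N) = 0)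
    {a b : ℤ} {N : PC} (ha : a < 0)
    (hdual : h 0 ((-2 - a) • C0 + (2 * g - 2 - e - b) • F + πstar (k - N)) = 0)
    (hRR : ((a : ℚ) + 1) * ((b : ℚ) + 1 - (g : ℚ) - (a : ℚ) * (e : ℚ) / 2) = 0) :
    ∀ i, h i (a • C0 + b • F + πstar N) = 0 := by
  refine forall_eq_zero_of_euler_char_eq_zero h hdim (hC0neg a b N ha) ?_ (hchi a b N ▸ hRR)
  rwa [hSerre 2 le_rfl, canonical_sub_eq g e C0 F πstar k K hK]

end RuledSurface

theorem ulrich_line_bundle_exists_general {DX PC : Type*} [AddCommGroup DX] [AddCommGroup PC]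
    (g e β : ℤ)
    (C0 F : DX) (πstar : PC →+ DX) (k M : PC)
    (K : DX) (hK : K = (-2) • C0 + (2 * g - 2 - e) • F + πstar k)
    (h : ℕ → DX → ℕ)
    (hSerre : ∀ i ≤ 2, ∀ D : DX, h i D = h (2 - i) (K - D))
    (hdim : ∀ i > 2, ∀ D : DX, h i D = 0)
    (hchi : ∀ (a b : ℤ) (N : PC),
      ((h 0 (a • C0 + b • F + πstar N) : ℚ)
        - (h 1 (a • C0 + b • F + πstar N) : ℚ)
        + (h 2 (a • C0 + b • F + πstar N) : ℚ))
        = ((a : ℚ) + 1) * ((b : ℚ) + 1 - (g : ℚ) - (a : ℚ) * (e : ℚ) / 2))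
    (hC0neg : ∀ (a b : ℤ) (N : PC), a < 0 → h 0 (a • C0 + b • F + πstar N) = 0)
    (hgen : ∀ N : PC, (N = k - M ∨ N = M) → h 0 ((g - 1) • F + πstar N) = 0) :
    ∀ i : ℕ, ∀ t : ℤ, (t = 1 ∨ t = 2) →
      h i (((2 * β + g - 1 - e) • F + πstar M) - t • (C0 + β • F)) = 0 := by
  intro i t ht
  have htwist : ((2 * β + g - 1 - e) • F + πstar M) - t • (C0 + β • F)
      = (-t) • C0 + (2 * β + g - 1 - e - t * β) • F + πstar M := by
    module
  rw [htwist]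
  refine forall_cohomology_eq_zero_of_riemannRoch_eq_zero g e C0 F πstar k K hK h
    hSerre hdim hchi hC0neg (by omega) ?_ ?_ i
  · rcases ht with rfl | rfl
    · exact hC0neg _ _ _ (by norm_num)
    · have hdual : ((-2 : ℤ) - -2) • C0 + (2 * g - 2 - e - (2 * β + g - 1 - e - 2 * β)) • F
          + πstar (k - M) = (g - 1) • F + πstar (k - M) := by
        module
      exact hdual ▸ hgen _ (.inl rfl)
  · rcases ht with rfl | rfl <;> push_cast <;> ring

/-- on a geometrically ruled surface `π : X → C` with invariant
`e > 0`, polarized by `H = C_0 + βF` (`β > e`), the line bundle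
`O_X((2β+g-1-e)F) ⊗ π*M`, with `M` a general degree-0 line bundle on `C`, is
Ulrich.  Divisor classes on `X` live in `DX`, generated by `C_0`, `F` and
pullbacks `πstar N` of classes on `C`; `h i D` is `h^i(X, O_X(D))`.
Hypotheses: `K_X = -2C_0+(2g-2-e)F + π*k`; Serre duality; vanishing above the
dimension; Riemann–Roch `χ(aC_0+bF+π*N) = (a+1)(b+1-g-ae/2)`; vanishing of `h^0`
when the `C_0`-coefficient is negative; and genericity of `M` (the relevant
degree-`(g-1)` twists have no sections). -/
theorem ulrich_line_bundle_exists {DX PC : Type*} [AddCommGroup DX] [AddCommGroup PC]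
    (g e β : ℤ) (he : 1 ≤ e) (hβ : e < β)
    (C0 F : DX) (πstar : PC →+ DX) (k M : PC)
    (K : DX) (hK : K = (-2) • C0 + (2 * g - 2 - e) • F + πstar k)
    (h : ℕ → DX → ℕ)
    (hSerre : ∀ i ≤ 2, ∀ D : DX, h i D = h (2 - i) (K - D))
    (hdim : ∀ i > 2, ∀ D : DX, h i D = 0)
    (hchi : ∀ (a b : ℤ) (N : PC),
      ((h 0 (a • C0 + b • F + πstar N) : ℚ)
        - (h 1 (a • C0 + b • F + πstar N) : ℚ)
        + (h 2 (a • C0 + b • F + πstar N) : ℚ))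
        = ((a : ℚ) + 1) * ((b : ℚ) + 1 - (g : ℚ) - (a : ℚ) * (e : ℚ) / 2))
    (hC0neg : ∀ (a b : ℤ) (N : PC), a < 0 → h 0 (a • C0 + b • F + πstar N) = 0)
    (hgen : ∀ N : PC, (N = k - M ∨ N = M) → h 0 ((g - 1) • F + πstar N) = 0) :
    ∀ i : ℕ, ∀ t : ℤ, (t = 1 ∨ t = 2) →
      h i (((2 * β + g - 1 - e) • F + πstar M) - t • (C0 + β • F)) = 0 :=
  ulrich_line_bundle_exists_general g e β C0 F πstar k M K hK h hSerre hdim hchi hC0neg hgen
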